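/- Let G be a finite simple graph, and let S and T be disjoint sets of vertices such that every neighbor of a vertex of T lies in T ∪ S. Then for all u, v ∈ T, the extended distance satisfies edist_G(u, v) = min( edist_{G[S ∪ T]}(u, v) , inf over pairs s, s' ∈ S of ( edist_{G[S ∪ T]}(u, s) + edist_G(s, s') + edist_{G[S ∪ T]}(s', v) ) ). -/

import Mathlib

/-!
Cut a shortest `u`–`v` walk in `G` at the first and at the last vertex outside `S ∪ T`.
Since a vertex of `T` has no neighbours outside `S ∪ T`, the walk can only leave `S ∪ T`
from a vertex `s ∈ S` and re-enter it at a vertex `s' ∈ S`; the pieces before `s` and after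
`s'` are walks in `G[S ∪ T]`. If the walk never leaves, it is itself a walk in `G[S ∪ T]`.
-/

namespace SimpleGraph

variable {V W : Type*} {G : SimpleGraph V}

theorem edist_map_le {G' : SimpleGraph W} (f : G →g G') (u v : V) :
    G'.edist (f u) (f v) ≤ G.edist u v := by
  rcases eq_or_ne (G.edist u v) ⊤ with h | h
  · exact h ▸ le_top
  · obtain ⟨p, hp⟩ := exists_walk_of_edist_ne_top h
    rw [← hp, ← p.length_map f]
    exact edist_le _

theorem edist_le_edist_induce (s : Set V) (x y : s) :
    G.edist x y ≤ (G.induce s).edist x y :=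
  edist_map_le (Embedding.induce s).toHom x y

variable {S T : Set V}

theorem Walk.edist_induce_le_or_exists_exit (hT : ∀ v ∈ T, ∀ w, G.Adj v w → w ∈ T ∪ S)
    {a b : V} (p : G.Walk a b) (ha : a ∈ S ∪ T) (hb : b ∈ S ∪ T) :
    (G.induce (S ∪ T)).edist ⟨a, ha⟩ ⟨b, hb⟩ ≤ p.length ∨
      ∃ s : S, (G.induce (S ∪ T)).edist ⟨a, ha⟩ ⟨s, Set.mem_union_left T s.2⟩ +
        G.edist s b ≤ p.length := by
  induction p with
  | nil => exact Or.inl (by simp)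
  | @cons a c b hac p ih =>
    have hlen : ((p.cons hac).length : ℕ∞) = 1 + p.length := by
      rw [Walk.length_cons, Nat.cast_add, Nat.cast_one, add_comm]
    rw [hlen]
    by_cases hc : c ∈ S ∪ T
    · have hac' : (G.induce (S ∪ T)).edist ⟨a, ha⟩ ⟨c, hc⟩ ≤ 1 :=
        (edist_eq_one_iff_adj.mpr (show (G.induce (S ∪ T)).Adj ⟨a, ha⟩ ⟨c, hc⟩ from hac)).le
      refine (ih hc hb).imp (fun h ↦ ?_) fun ⟨s, hs⟩ ↦ ⟨s, ?_⟩
      · exact SimpleGraph.edist_triangle.trans (add_le_add hac' h)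
      · calc _ ≤ (G.induce (S ∪ T)).edist ⟨a, ha⟩ ⟨c, hc⟩ +
                (G.induce (S ∪ T)).edist ⟨c, hc⟩ ⟨s, Set.mem_union_left T s.2⟩ + G.edist s b := by
              gcongr; exact SimpleGraph.edist_triangle
          _ ≤ 1 + p.length := by rw [add_assoc]; exact add_le_add hac' hs
    · have haS : a ∈ S := ha.resolve_right fun haT ↦ hc (hT a haT c hac).symm
      refine Or.inr ⟨⟨a, haS⟩, ?_⟩
      rw [edist_self, zero_add, ← hlen]
      exact edist_le _

theorem edist_induce_le_or_exists_exit (hT : ∀ v ∈ T, ∀ w, G.Adj v w → w ∈ T ∪ S)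
    {a b : V} (ha : a ∈ S ∪ T) (hb : b ∈ S ∪ T) :
    (G.induce (S ∪ T)).edist ⟨a, ha⟩ ⟨b, hb⟩ ≤ G.edist a b ∨
      ∃ s : S, (G.induce (S ∪ T)).edist ⟨a, ha⟩ ⟨s, Set.mem_union_left T s.2⟩ +
        G.edist s b ≤ G.edist a b := by
  rcases eq_or_ne (G.edist a b) ⊤ with h | h
  · exact Or.inl (h ▸ le_top)
  · obtain ⟨p, hp⟩ := exists_walk_of_edist_ne_top h
    rw [← hp]
    exact p.edist_induce_le_or_exists_exit hT ha hb

theorem edist_induce_le_or_exists_exit_reenter (hT : ∀ v ∈ T, ∀ w, G.Adj v w → w ∈ T ∪ S)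
    {a b : V} (ha : a ∈ S ∪ T) (hb : b ∈ S ∪ T) :
    (G.induce (S ∪ T)).edist ⟨a, ha⟩ ⟨b, hb⟩ ≤ G.edist a b ∨
      ∃ s s' : S, (G.induce (S ∪ T)).edist ⟨a, ha⟩ ⟨s, Set.mem_union_left T s.2⟩ +
        G.edist s s' + (G.induce (S ∪ T)).edist ⟨s', Set.mem_union_left T s'.2⟩ ⟨b, hb⟩ ≤
          G.edist a b := by
  refine (edist_induce_le_or_exists_exit hT ha hb).imp_right fun ⟨s, hs⟩ ↦ ?_
  -- Read the remainder from `s` to `b` backwards: it re-enters `S ∪ T` at some `s' ∈ S`.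
  rcases edist_induce_le_or_exists_exit hT hb (Set.mem_union_left T s.2) with hbs | ⟨s', hbs'⟩
  · refine ⟨s, s, le_trans ?_ hs⟩
    rw [edist_self, add_zero]
    gcongr
    simpa only [edist_comm] using hbs
  · refine ⟨s, s', le_trans ?_ hs⟩
    rw [add_assoc]
    gcongr
    simpa only [edist_comm, add_comm] using hbs'

end SimpleGraph

open SimpleGraph in
theorem edist_within_T_general {V : Type*} (G : SimpleGraph V) (S T : Set V)
    (hT : ∀ v ∈ T, ∀ w, G.Adj v w → w ∈ T ∪ S)
    (u v : V) (hu : u ∈ T) (hv : v ∈ T) :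
    G.edist u v =
      min ((G.induce (S ∪ T)).edist ⟨u, Set.mem_union_right S hu⟩
            ⟨v, Set.mem_union_right S hv⟩)
        (⨅ s : S, ⨅ s' : S,
          ((G.induce (S ∪ T)).edist ⟨u, Set.mem_union_right S hu⟩
              ⟨(s : V), Set.mem_union_left T s.2⟩ +
            G.edist s s' +
            (G.induce (S ∪ T)).edist ⟨(s' : V), Set.mem_union_left T s'.2⟩
              ⟨v, Set.mem_union_right S hv⟩)) := by
  refine le_antisymm (le_min (edist_le_edist_induce _ _ _) (le_iInf₂ fun s s' ↦ ?_)) ?_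
  · calc G.edist u v ≤ G.edist u s + G.edist s s' + G.edist s' v :=
          SimpleGraph.edist_triangle.trans (by gcongr; exact SimpleGraph.edist_triangle)
      _ ≤ _ := by gcongr <;> exact edist_le_edist_induce _ _ _
  · rcases edist_induce_le_or_exists_exit_reenter hT (Set.mem_union_right S hu)
      (Set.mem_union_right S hv) with h | ⟨s, s', h⟩
    · exact (min_le_left _ _).trans h
    · exact (min_le_right _ _).trans ((iInf₂_le s s').trans h)

/-- If `T` is a union of connected components of `G - S`, then for `u, v ∈ T`, the distance
from `u` to `v` in `G` is the minimum of the distance from `u` to `v` in `G[S ∪ T]` and the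
infimum over `s, s' ∈ S` of the distance from `u` to `s` in `G[S ∪ T]`, plus the distance
from `s` to `s'` in `G`, plus the distance from `s'` to `v` in `G[S ∪ T]`. -/
theorem edist_within_T {V : Type*} (G : SimpleGraph V) (S T : Set V)
    (hdisj : Disjoint S T)
    (hT : ∀ v ∈ T, ∀ w, G.Adj v w → w ∈ T ∪ S)
    (u v : V) (hu : u ∈ T) (hv : v ∈ T) :
    G.edist u v =
      min ((G.induce (S ∪ T)).edist ⟨u, Set.mem_union_right S hu⟩
            ⟨v, Set.mem_union_right S hv⟩)
        (⨅ s : S, ⨅ s' : S,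
          ((G.induce (S ∪ T)).edist ⟨u, Set.mem_union_right S hu⟩
              ⟨(s : V), Set.mem_union_left T s.2⟩ +
            G.edist s s' +
            (G.induce (S ∪ T)).edist ⟨(s' : V), Set.mem_union_left T s'.2⟩
              ⟨v, Set.mem_union_right S hv⟩)) :=
  edist_within_T_general G S T hT u v hu hv
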